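/- Let m be a positive integer, C ≤ F₂^{24m} a self-dual doubly-even binary code, and σ = (1,2)(3,4)⋯(24m−1,24m) a fixed point free involution of the coordinates with σ(C) = C. Let P = π(C(σ)) = {(c₁,…,c_{12m}) ∈ F₂^{12m} : (c₁,c₁,…,c_{12m},c_{12m}) ∈ C}. If P is not self-dual (P ≠ P⊥), then there exists a semi self-dual code D ≤ F₂^{12m} with P⊥ ⊆ D ⊆ D⊥ ⊆ P. -/

import Mathlib

/-- The fixed point free involution `(1,2)(3,4)⋯(24m-1,24m)` of the `24m`
coordinates (0-indexed: it swaps `2k` and `2k+1`). -/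
def pairSwap24 (m : ℕ) : Equiv.Perm (Fin (24 * m)) where
  toFun i := ⟨2 * (i.val / 2) + (1 - i.val % 2), by have := i.isLt; omega⟩
  invFun i := ⟨2 * (i.val / 2) + (1 - i.val % 2), by have := i.isLt; omega⟩
  left_inv i := by
    apply Fin.ext
    simp only []
    omega
  right_inv i := by
    apply Fin.ext
    simp only []
    omega

/-- The linear map sending `(c₁, …, c_{12m})` to
`(c₁, c₁, c₂, c₂, …, c_{12m}, c_{12m})`. -/
def doubleMap24 (m : ℕ) : (Fin (12 * m) → ZMod 2) →ₗ[ZMod 2] (Fin (24 * m) → ZMod 2) where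
  toFun c := fun i => c ⟨i.val / 2, by have := i.isLt; omega⟩
  map_add' := fun _ _ => rfl
  map_smul' := fun _ _ => rfl

def wt {n : ℕ} (c : Fin n → ZMod 2) : ℕ :=
  (Finset.univ.filter fun i => c i ≠ 0).card

def dualCode {n : ℕ} (D : Submodule (ZMod 2) (Fin n → ZMod 2)) :
    Submodule (ZMod 2) (Fin n → ZMod 2) where
  carrier := {v | ∀ c ∈ D, ∑ i, v i * c i = 0}
  zero_mem' := by intro c hc; simp
  add_mem' := by
    intro a b ha hb c hc
    simp [add_mul, Finset.sum_add_distrib, ha c hc, hb c hc]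
  smul_mem' := by
    intro r a ha c hc
    simp [mul_assoc, ← Finset.mul_sum, ha c hc]

def IsSemiSelfDual {n : ℕ} (D : Submodule (ZMod 2) (Fin n → ZMod 2)) : Prop :=
  D ≤ dualCode D ∧ (fun _ => 1 : Fin n → ZMod 2) ∈ D ∧
    Module.finrank (ZMod 2) (dualCode D) = Module.finrank (ZMod 2) D + 2

noncomputable def minDist {n : ℕ} (C : Submodule (ZMod 2) (Fin n → ZMod 2)) : ℕ :=
  sInf {k | ∃ c ∈ C, c ≠ 0 ∧ wt c = k}

def IsDoublyEven {n : ℕ} (D : Submodule (ZMod 2) (Fin n → ZMod 2)) : Prop :=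
  ∀ c ∈ D, wt c % 4 = 0

/-!
Write `P = π(C(σ))`. Doubling a word doubles its weight, so `C` doubly even makes every word of
`P` even: `𝟏 ∈ P⊥` and every word of `P` is orthogonal to itself. The transpose of doubling folds
each coordinate pair, and the doubled fold of `c ∈ C` is `c + σc ∈ C`; hence `P⊥` doubles into
`C⊥ = C`, i.e. `P⊥ ⊆ P`. Since `P⊥ ≠ P`, `dim P⊥ < 6m`, and since all of `P = P⊥⊥` is isotropic,
`P⊥` extends one vector at a time to a self-orthogonal `D` with `dim D = 6m - 1`, whence
`dim D⊥ = 6m + 1`.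
-/

open Module Matrix

lemma isRefl_toBilin'_one {K ι : Type*} [CommRing K] [Fintype ι] [DecidableEq ι] :
    (toBilin' (1 : Matrix ι ι K)).IsRefl := fun v w => by
  simp [toBilin'_apply', dotProduct_comm]

lemma nondegenerate_toBilin'_one {K ι : Type*} [Field K] [Fintype ι] [DecidableEq ι] :
    (toBilin' (1 : Matrix ι ι K)).Nondegenerate :=
  LinearMap.BilinForm.nondegenerate_toBilin'_of_det_ne_zero' 1 (by simp)

section DualCode

variable {n : ℕ}

lemma mem_dualCode {D : Submodule (ZMod 2) (Fin n → ZMod 2)} {v : Fin n → ZMod 2} :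
    v ∈ dualCode D ↔ ∀ c ∈ D, v ⬝ᵥ c = 0 :=
  Iff.rfl

lemma dualCode_eq_orthogonal (D : Submodule (ZMod 2) (Fin n → ZMod 2)) :
    dualCode D = (toBilin' (1 : Matrix (Fin n) (Fin n) (ZMod 2))).orthogonal D := by
  ext v
  simp [mem_dualCode, LinearMap.BilinForm.mem_orthogonal_iff, toBilin'_apply', dotProduct_comm]

lemma dualCode_dualCode (D : Submodule (ZMod 2) (Fin n → ZMod 2)) : dualCode (dualCode D) = D := by
  rw [dualCode_eq_orthogonal, dualCode_eq_orthogonal,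
    LinearMap.BilinForm.orthogonal_orthogonal nondegenerate_toBilin'_one isRefl_toBilin'_one]

lemma finrank_add_finrank_dualCode (D : Submodule (ZMod 2) (Fin n → ZMod 2)) :
    finrank (ZMod 2) D + finrank (ZMod 2) (dualCode D) = n := by
  have := LinearMap.BilinForm.finrank_add_finrank_orthogonal isRefl_toBilin'_one D
  rw [LinearMap.BilinForm.orthogonal_top_eq_bot nondegenerate_toBilin'_one, inf_bot_eq,
    finrank_bot, add_zero, ← dualCode_eq_orthogonal] at this
  simpa using this

lemma dualCode_antitone {D E : Submodule (ZMod 2) (Fin n → ZMod 2)} (h : D ≤ E) :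
    dualCode E ≤ dualCode D :=
  fun _ hv c hc => hv c (h hc)

lemma dualCode_sup (D E : Submodule (ZMod 2) (Fin n → ZMod 2)) :
    dualCode (D ⊔ E) = dualCode D ⊓ dualCode E := by
  refine le_antisymm (le_inf (dualCode_antitone le_sup_left) (dualCode_antitone le_sup_right)) ?_
  intro v hv c hc
  obtain ⟨hD, hE⟩ := Submodule.mem_inf.mp hv
  obtain ⟨d, hd, e, he, rfl⟩ := Submodule.mem_sup.mp hc
  change v ⬝ᵥ (d + e) = 0
  rw [dotProduct_add, mem_dualCode.mp hD d hd, mem_dualCode.mp hE e he, add_zero]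

lemma mem_dualCode_span_singleton {x v : Fin n → ZMod 2} :
    v ∈ dualCode (Submodule.span (ZMod 2) {x}) ↔ v ⬝ᵥ x = 0 := by
  refine ⟨fun h => h x (Submodule.mem_span_singleton_self x), fun h c hc => ?_⟩
  obtain ⟨r, rfl⟩ := Submodule.mem_span_singleton.mp hc
  change v ⬝ᵥ (r • x) = 0
  rw [dotProduct_smul, h, smul_zero]

end DualCode

section SelfOrthogonal

variable {n : ℕ}

lemma sum_eq_wt (c : Fin n → ZMod 2) : ∑ i, c i = wt c := by
  have h : ∀ a : ZMod 2, a = if a ≠ 0 then 1 else 0 := by decide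
  rw [wt, Finset.card_filter, Nat.cast_sum]
  exact Finset.sum_congr rfl fun i _ => (h (c i)).trans (by split_ifs <;> simp)

lemma dotProduct_self_eq_wt (c : Fin n → ZMod 2) : c ⬝ᵥ c = wt c := by
  have h : ∀ a : ZMod 2, a * a = a := by decide
  simp only [dotProduct, h, sum_eq_wt]

lemma sup_span_singleton_le_dualCode {D : Submodule (ZMod 2) (Fin n → ZMod 2)}
    {x : Fin n → ZMod 2} (hD : D ≤ dualCode D) (hx : x ∈ dualCode D) (hxx : x ⬝ᵥ x = 0) :
    D ⊔ Submodule.span (ZMod 2) {x} ≤ dualCode (D ⊔ Submodule.span (ZMod 2) {x}) := by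
  have hDx : D ≤ dualCode (Submodule.span (ZMod 2) {x}) := fun d hd =>
    mem_dualCode_span_singleton.mpr (by rw [dotProduct_comm]; exact mem_dualCode.mp hx d hd)
  have hxx' : Submodule.span (ZMod 2) {x} ≤ dualCode (Submodule.span (ZMod 2) {x}) :=
    (Submodule.span_singleton_le_iff_mem _ _).mpr (mem_dualCode_span_singleton.mpr hxx)
  rw [dualCode_sup]
  exact sup_le (le_inf hD hDx) (le_inf ((Submodule.span_singleton_le_iff_mem _ _).mpr hx) hxx')

lemma exists_selfOrthogonal_finrank_eq {D : Submodule (ZMod 2) (Fin n → ZMod 2)}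
    (hD : D ≤ dualCode D) (hiso : ∀ x ∈ dualCode D, x ⬝ᵥ x = 0) {r : ℕ}
    (hr : finrank (ZMod 2) D ≤ r) (hrn : 2 * r ≤ n) :
    ∃ E, D ≤ E ∧ E ≤ dualCode E ∧ finrank (ZMod 2) E = r := by
  induction r, hr using Nat.le_induction with
  | base => exact ⟨D, le_rfl, hD, rfl⟩
  | succ r _ ih =>
    obtain ⟨E, hDE, hE, hEr⟩ := ih (by omega)
    have hlt : E < dualCode E := by
      refine lt_of_le_of_ne hE fun h => ?_
      have := finrank_add_finrank_dualCode E
      rw [← h] at this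
      omega
    obtain ⟨x, hx, hxE⟩ := SetLike.exists_of_lt hlt
    refine ⟨E ⊔ Submodule.span (ZMod 2) {x}, hDE.trans le_sup_left,
      sup_span_singleton_le_dualCode hE hx (hiso x (dualCode_antitone hDE hx)), ?_⟩
    rw [Submodule.finrank_sup_span_singleton hxE, hEr]

end SelfOrthogonal

theorem exists_isSemiSelfDual_between {n : ℕ} {P : Submodule (ZMod 2) (Fin n → ZMod 2)}
    (hP : dualCode P < P) (heven : ∀ c ∈ P, Even (wt c)) (hn : Even n) :
    ∃ D, IsSemiSelfDual D ∧ dualCode P ≤ D ∧ dualCode D ≤ P := by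
  obtain ⟨s, rfl⟩ := hn
  have hwt : ∀ c ∈ P, (wt c : ZMod 2) = 0 := fun c hc =>
    (ZMod.natCast_eq_zero_iff_even).mpr (heven c hc)
  have hrank := finrank_add_finrank_dualCode P
  have hlt := Submodule.finrank_lt_finrank_of_lt hP
  have hiso : ∀ x ∈ dualCode (dualCode P), x ⬝ᵥ x = 0 := fun x hx => by
    rw [dualCode_dualCode] at hx
    rw [dotProduct_self_eq_wt, hwt x hx]
  obtain ⟨D, hPD, hD, hDr⟩ := exists_selfOrthogonal_finrank_eq ((dualCode_dualCode P).symm ▸ hP.le) hiso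
    (r := s - 1) (by omega) (by omega)
  have hDP : dualCode D ≤ P := dualCode_dualCode P ▸ dualCode_antitone hPD
  have hone : (1 : Fin (s + s) → ZMod 2) ∈ dualCode P := fun c hc => by
    change 1 ⬝ᵥ c = 0
    rw [one_dotProduct, sum_eq_wt, hwt c hc]
  have hDrank := finrank_add_finrank_dualCode D
  exact ⟨D, ⟨hD, hPD hone, by omega⟩, hPD, hDP⟩

section Doubling

variable {m : ℕ}

def pairEquiv (m : ℕ) : Fin (12 * m) × Fin 2 ≃ Fin (24 * m) :=
  finProdFinEquiv.trans (finCongr (by ring))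

@[simp] lemma pairEquiv_val (k : Fin (12 * m)) (j : Fin 2) :
    (pairEquiv m (k, j)).val = j + 2 * k :=
  rfl

lemma sum_pairEquiv {M : Type*} [AddCommMonoid M] (f : Fin (24 * m) → M) :
    ∑ i, f i = ∑ k, ∑ j, f (pairEquiv m (k, j)) := by
  rw [← (pairEquiv m).sum_comp, Fintype.sum_prod_type]

@[simp] lemma doubleMap24_pairEquiv (c : Fin (12 * m) → ZMod 2) (k : Fin (12 * m)) (j : Fin 2) :
    doubleMap24 m c (pairEquiv m (k, j)) = c k := by
  change c _ = c k
  congr 1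
  ext
  simp only [pairEquiv_val]
  omega

lemma pairSwap24_inv_pairEquiv (k : Fin (12 * m)) (j : Fin 2) :
    (pairSwap24 m)⁻¹ (pairEquiv m (k, j)) = pairEquiv m (k, j.rev) := by
  ext
  change 2 * ((j + 2 * k : ℕ) / 2) + (1 - (j + 2 * k : ℕ) % 2) = _
  simp only [pairEquiv_val, Fin.val_rev]
  omega

lemma wt_doubleMap24 (c : Fin (12 * m) → ZMod 2) : wt (doubleMap24 m c) = 2 * wt c := by
  simp only [wt, Finset.card_filter, sum_pairEquiv, doubleMap24_pairEquiv, Fin.sum_univ_two,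
    Finset.mul_sum]
  exact Finset.sum_congr rfl fun _ _ => by ring

def foldPairs (m : ℕ) (c : Fin (24 * m) → ZMod 2) : Fin (12 * m) → ZMod 2 :=
  fun k => ∑ j, c (pairEquiv m (k, j))

lemma doubleMap24_dotProduct (u : Fin (12 * m) → ZMod 2) (c : Fin (24 * m) → ZMod 2) :
    doubleMap24 m u ⬝ᵥ c = u ⬝ᵥ foldPairs m c := by
  simp only [dotProduct, sum_pairEquiv, doubleMap24_pairEquiv, foldPairs, Finset.mul_sum]

lemma doubleMap24_foldPairs (c : Fin (24 * m) → ZMod 2) :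
    doubleMap24 m (foldPairs m c) = c + fun i => c ((pairSwap24 m)⁻¹ i) := by
  funext i
  obtain ⟨⟨k, j⟩, rfl⟩ := (pairEquiv m).surjective i
  simp only [doubleMap24_pairEquiv, foldPairs, Fin.sum_univ_two, Pi.add_apply,
    pairSwap24_inv_pairEquiv]
  fin_cases j
  · rfl
  · exact add_comm _ _

end Doubling

section FixedCode

variable {m : ℕ} {C : Submodule (ZMod 2) (Fin (24 * m) → ZMod 2)}

lemma even_wt_of_mem_comap_doubleMap24 (hde : IsDoublyEven C) {c : Fin (12 * m) → ZMod 2}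
    (hc : c ∈ C.comap (doubleMap24 m)) : Even (wt c) := by
  have h := hde _ hc
  rw [wt_doubleMap24] at h
  exact Nat.even_iff.mpr (by omega)

lemma dualCode_comap_doubleMap24_le (hC : C = dualCode C)
    (hσC : ∀ c ∈ C, (fun i => c ((pairSwap24 m)⁻¹ i)) ∈ C) :
    dualCode (C.comap (doubleMap24 m)) ≤ C.comap (doubleMap24 m) := by
  intro u hu
  rw [Submodule.mem_comap, hC]
  intro c hc
  have hfold : foldPairs m c ∈ C.comap (doubleMap24 m) := by
    rw [Submodule.mem_comap, doubleMap24_foldPairs]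
    exact C.add_mem hc (hσC c hc)
  exact (doubleMap24_dotProduct u c).trans (mem_dualCode.mp hu _ hfold)

end FixedCode

theorem exists_semi_self_dual_between_proj_general
    {m : ℕ} (C : Submodule (ZMod 2) (Fin (24 * m) → ZMod 2))
    (hC : C = dualCode C) (hde : IsDoublyEven C)
    (hσC : ∀ c : Fin (24 * m) → ZMod 2,
      c ∈ C ↔ (fun i => c ((pairSwap24 m)⁻¹ i)) ∈ C)
    (hP : Submodule.comap (doubleMap24 m) C ≠
      dualCode (Submodule.comap (doubleMap24 m) C)) :
    ∃ D : Submodule (ZMod 2) (Fin (12 * m) → ZMod 2), IsSemiSelfDual D ∧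
      dualCode (Submodule.comap (doubleMap24 m) C) ≤ D ∧
      D ≤ dualCode D ∧
      dualCode D ≤ Submodule.comap (doubleMap24 m) C := by
  have hPP := lt_of_le_of_ne (dualCode_comap_doubleMap24_le hC fun c => (hσC c).mp) hP.symm
  obtain ⟨D, hD, hPD, hDP⟩ := exists_isSemiSelfDual_between hPP
    (fun _ hc => even_wt_of_mem_comap_doubleMap24 hde hc) ⟨6 * m, by ring⟩
  exact ⟨D, hD, hPD, hD.1, hDP⟩

/-- Let `C` be a self-dual doubly-even code of length `24m` invariant under the
fixed point free involution `σ = (1,2)(3,4)⋯(24m-1,24m)` and let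
`P = π(C(σ))`. If `P` is not self-dual, then there is a semi self-dual code `D`
with `P⊥ ⊆ D ⊆ D⊥ ⊆ P`. -/
theorem exists_semi_self_dual_between_proj
    {m : ℕ} (hm : 0 < m) (C : Submodule (ZMod 2) (Fin (24 * m) → ZMod 2))
    (hC : C = dualCode C) (hde : IsDoublyEven C)
    (hσC : ∀ c : Fin (24 * m) → ZMod 2,
      c ∈ C ↔ (fun i => c ((pairSwap24 m)⁻¹ i)) ∈ C)
    (hP : Submodule.comap (doubleMap24 m) C ≠
      dualCode (Submodule.comap (doubleMap24 m) C)) :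
    ∃ D : Submodule (ZMod 2) (Fin (12 * m) → ZMod 2), IsSemiSelfDual D ∧
      dualCode (Submodule.comap (doubleMap24 m) C) ≤ D ∧
      D ≤ dualCode D ∧
      dualCode D ≤ Submodule.comap (doubleMap24 m) C :=
  exists_semi_self_dual_between_proj_general C hC hde hσC hP
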